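/- arXiv:2111.13768 — 2 statements merged into one kernel-verified Lean document; each statement's English description precedes it below -/
import Mathlib

section
/- Let 𝒢 be a groupoid whose set of objects 𝒢₀ is finite and let A = ⊕_{g∈𝒢} A_g be a 𝒢-graded algebra over a field k. Then for every object e ∈ 𝒢₀ the subalgebra A_e has an identity element 1_e, and the identity of A decomposes as 1_A = Σ_{e∈𝒢₀} 1_e. -/
open scoped Classical

noncomputable section

universe u v w

/-- A groupoid, presented as a set of morphisms with partially defined
composition.  `s g` is the domain (source) identity `d(g)`, `t g` the range
(target) identity `r(g)`; `mul g h` is the composite `gh`, meaningful when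
`s g = t h`. -/
structure Gpd (G : Type u) where
  s : G → G
  t : G → G
  inv : G → G
  mul : G → G → G
  s_s : ∀ g, s (s g) = s g
  t_s : ∀ g, t (s g) = s g
  s_t : ∀ g, s (t g) = t g
  t_t : ∀ g, t (t g) = t g
  s_mul : ∀ g h, s g = t h → s (mul g h) = s h
  t_mul : ∀ g h, s g = t h → t (mul g h) = t g
  mul_assoc : ∀ g h l, s g = t h → s h = t l → mul (mul g h) l = mul g (mul h l)
  mul_src : ∀ g, mul g (s g) = g
  tgt_mul : ∀ g, mul (t g) g = g
  s_inv : ∀ g, s (inv g) = t g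
  t_inv : ∀ g, t (inv g) = s g
  inv_mul : ∀ g, mul (inv g) g = s g
  mul_inv : ∀ g, mul g (inv g) = t g

namespace Gpd

variable {G : Type u}

/-- `e` is an object (identity) of the groupoid. -/
def obj (𝒢 : Gpd G) (e : G) : Prop := 𝒢.s e = e

/-- The set `𝒢₀` of objects of the groupoid. -/
def Objs (𝒢 : Gpd G) : Set G := {e | 𝒢.obj e}

end Gpd

/-- An action `α = (X_g, α_g)` of a groupoid `𝒢` on a set `X`:
`car g` is the subset `X_g` and `act g` restricts to the bijection
`α_g : X_{g⁻¹} → X_g`. -/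
structure GpdSetAction {G : Type u} (𝒢 : Gpd G) (X : Type v) where
  car : G → Set X
  act : G → X → X
  car_t : ∀ g, car g = car (𝒢.t g)
  bijOn : ∀ g, Set.BijOn (act g) (car (𝒢.inv g)) (car g)
  act_id : ∀ e, 𝒢.obj e → ∀ x ∈ car e, act e x = x
  act_mul : ∀ g h, 𝒢.s g = 𝒢.t h → ∀ x ∈ car (𝒢.inv h),
    act g (act h x) = act (𝒢.mul g h) x

/-- `X` is a split `𝒢`-set: `X` is the disjoint union of the `X_e`, `e ∈ 𝒢₀`. -/
def GpdSetAction.Split {G : Type u} {𝒢 : Gpd G} {X : Type v} (α : GpdSetAction 𝒢 X) : Prop :=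
  ∀ x : X, ∃! e : G, 𝒢.obj e ∧ x ∈ α.car e

/-- The action is fully faithful: if `α_g` fixes some `x ∈ X_g ∩ X_{g⁻¹}`
then `g` is an identity. -/
def GpdSetAction.FullyFaithful {G : Type u} {𝒢 : Gpd G} {X : Type v}
    (α : GpdSetAction 𝒢 X) : Prop :=
  ∀ g x, x ∈ α.car g ∩ α.car (𝒢.inv g) → α.act g x = x → 𝒢.obj g

/-- A `𝒢`-grading of the `k`-algebra `A`:  `A = ⊕_{g ∈ 𝒢} A_g` with
`A_g A_h ⊆ A_{gh}` for composable `g, h` and `A_g A_h = 0` otherwise. -/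
structure GpdGrading {G : Type u} (𝒢 : Gpd G) (k : Type v) (A : Type w)
    [Field k] [Ring A] [Algebra k A] where
  comp : G → Submodule k A
  internal : DirectSum.IsInternal comp
  mul_mem : ∀ g h, 𝒢.s g = 𝒢.t h → ∀ a ∈ comp g, ∀ b ∈ comp h, a * b ∈ comp (𝒢.mul g h)
  mul_eq_zero : ∀ g h, 𝒢.s g ≠ 𝒢.t h → ∀ a ∈ comp g, ∀ b ∈ comp h, a * b = 0

/-- The homogeneous component of degree `g` of `a ∈ A`. -/
noncomputable def GpdGrading.proj {G : Type u} {𝒢 : Gpd G} {k : Type v} {A : Type w}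
    [Field k] [Ring A] [Algebra k A] (𝒜 : GpdGrading 𝒢 k A) (g : G) (a : A) : A :=
  ((Equiv.ofBijective _ 𝒜.internal).symm a g : A)

/-- `one : G → A` is a family of local units for the grading: each `one e`
(`e ∈ 𝒢₀`) is an identity element of `A_e` and `1_A = Σ_{e ∈ 𝒢₀} 1_e`. -/
def IsIdFamily {G : Type u} {𝒢 : Gpd G} {k : Type v} {A : Type w}
    [Field k] [Ring A] [Algebra k A] (𝒜 : GpdGrading 𝒢 k A) (one : G → A) : Prop :=
  (∀ e, 𝒢.obj e → one e ∈ 𝒜.comp e ∧ ∀ a ∈ 𝒜.comp e, one e * a = a ∧ a * one e = a) ∧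
  (1 : A) = ∑ᶠ e ∈ 𝒢.Objs, one e

/-- The multiplication of the smash product `A #_α^𝒢 X`, defined on the
ambient space of formal sums `Σ a_{(g,x)} δ_{(g,x)}`:
`(a δ_{(g,x)}) (b δ_{(h,y)}) = (a b) δ_{(gh, y)}` when `d(g) = r(h)` and
`α_h(y) = x`, and `0` otherwise. -/
noncomputable def smashMul {G : Type u} {𝒢 : Gpd G} {X : Type v} {A : Type w} [Ring A]
    (α : GpdSetAction 𝒢 X) (f₁ f₂ : (G × X) →₀ A) : (G × X) →₀ A :=
  f₁.sum fun p a => f₂.sum fun q b =>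
    if 𝒢.s p.1 = 𝒢.t q.1 ∧ α.act q.1 q.2 = p.2
    then Finsupp.single (𝒢.mul p.1 q.1, q.2) (a * b) else 0

/-- The underlying set of the smash product `A #_α^𝒢 X = ⊕_{g} ⊕_{x ∈ X_{d(g)}} A_g δ_x`:
those formal sums whose `(g,x)`-coefficient lies in `A_g`, supported on pairs
with `x ∈ X_{d(g)}`. -/
def smashSet {G : Type u} {𝒢 : Gpd G} {X : Type v} {k : Type*} {A : Type w}
    [Field k] [Ring A] [Algebra k A]
    (α : GpdSetAction 𝒢 X) (𝒜 : GpdGrading 𝒢 k A) : Set ((G × X) →₀ A) :=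
  {f | ∀ p : G × X, f p ∈ 𝒜.comp p.1 ∧ (f p ≠ 0 → p.2 ∈ α.car (𝒢.s p.1))}

/-- The identity element `Σ_{e ∈ 𝒢₀} Σ_{x ∈ X_e} 1_e δ_x` of the smash product. -/
noncomputable def smashOne {G : Type u} {𝒢 : Gpd G} {X : Type v} {A : Type w} [Ring A]
    (α : GpdSetAction 𝒢 X) (one : G → A) : (G × X) →₀ A :=
  ∑ᶠ e ∈ 𝒢.Objs, ∑ᶠ x ∈ α.car e, Finsupp.single ((e, x) : G × X) (one e)

/-! Write `1 = Σ_g 1_g` with `1_g ∈ A_g` the homogeneous components of `1`, finitely many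
nonzero. For `a ∈ A_h`, each `a 1_g` lies in `A_{hg}` (or vanishes), and `hg = h` forces
`g = d(h)`; so the degree-`h` component of `a = a · 1` is `a 1_{d(h)}`, i.e. `a 1_{d(h)} = a`,
and symmetrically `1_{r(h)} a = a`. Then `r = Σ_{e ∈ 𝒢₀} 1_e` satisfies
`1_g r = 1_g 1_{d(g)} = 1_g` for every `g`, whence `r = 1 · r = Σ_g 1_g r = 1`. -/

namespace Gpd

variable {G : Type u} (𝒢 : Gpd G)

theorem obj_s (g : G) : 𝒢.obj (𝒢.s g) := 𝒢.s_s g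

theorem t_eq_of_obj {e : G} (he : 𝒢.obj e) : 𝒢.t e = e := by
  unfold obj at he
  rw [← he, t_s]

theorem eq_s_of_mul_eq_self {h g : G} (hc : 𝒢.s h = 𝒢.t g) (hm : 𝒢.mul h g = h) :
    g = 𝒢.s h :=
  calc g = 𝒢.mul (𝒢.mul (𝒢.inv h) h) g := by rw [inv_mul, hc, tgt_mul]
    _ = 𝒢.mul (𝒢.inv h) h := by rw [𝒢.mul_assoc _ _ _ (𝒢.s_inv h) hc, hm]
    _ = 𝒢.s h := 𝒢.inv_mul h

theorem eq_t_of_mul_eq_self {g h : G} (hc : 𝒢.s g = 𝒢.t h) (hm : 𝒢.mul g h = h) :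
    g = 𝒢.t h :=
  calc g = 𝒢.mul g (𝒢.mul h (𝒢.inv h)) := by rw [mul_inv, ← hc, mul_src]
    _ = 𝒢.mul h (𝒢.inv h) := by rw [← 𝒢.mul_assoc _ _ _ hc (𝒢.t_inv h).symm, hm]
    _ = 𝒢.t h := 𝒢.mul_inv h

end Gpd

namespace GpdGrading

open DirectSum

variable {G : Type u} {𝒢 : Gpd G} {k : Type v} {A : Type w} [Field k] [Ring A] [Algebra k A]
  (𝒜 : GpdGrading 𝒢 k A) [Decomposition 𝒜.comp]

theorem decompose_mul_eq_zero_of_ne_s {h g : G} {a b : A} (ha : a ∈ 𝒜.comp h)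
    (hb : b ∈ 𝒜.comp g) (hg : g ≠ 𝒢.s h) : (decompose 𝒜.comp (a * b) h : A) = 0 := by
  by_cases hc : 𝒢.s h = 𝒢.t g
  · exact decompose_of_mem_ne 𝒜.comp (𝒜.mul_mem h g hc a ha b hb)
      (fun hm => hg (𝒢.eq_s_of_mul_eq_self hc hm))
  · rw [𝒜.mul_eq_zero h g hc a ha b hb, decompose_zero, DirectSum.zero_apply,
      ZeroMemClass.coe_zero]

theorem decompose_mul_eq_zero_of_ne_t {g h : G} {b a : A} (hb : b ∈ 𝒜.comp g)
    (ha : a ∈ 𝒜.comp h) (hg : g ≠ 𝒢.t h) : (decompose 𝒜.comp (b * a) h : A) = 0 := by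
  by_cases hc : 𝒢.s g = 𝒢.t h
  · exact decompose_of_mem_ne 𝒜.comp (𝒜.mul_mem g h hc b hb a ha)
      (fun hm => hg (𝒢.eq_t_of_mul_eq_self hc hm))
  · rw [𝒜.mul_eq_zero g h hc b hb a ha, decompose_zero, DirectSum.zero_apply,
      ZeroMemClass.coe_zero]

def localUnit (g : G) : A := decompose 𝒜.comp 1 g

def unitSupport : Finset G := (decompose 𝒜.comp (1 : A)).support

theorem localUnit_mem (g : G) : 𝒜.localUnit g ∈ 𝒜.comp g := (decompose 𝒜.comp 1 g).2

theorem sum_localUnit : ∑ g ∈ 𝒜.unitSupport, 𝒜.localUnit g = 1 :=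
  sum_support_decompose 𝒜.comp 1

theorem localUnit_eq_zero {g : G} (hg : g ∉ 𝒜.unitSupport) : 𝒜.localUnit g = 0 := by
  rw [localUnit, DFinsupp.notMem_support_iff.mp hg, ZeroMemClass.coe_zero]

theorem decompose_mul_one_apply (a : A) (h : G) :
    (decompose 𝒜.comp a h : A) =
      ∑ g ∈ 𝒜.unitSupport, (decompose 𝒜.comp (a * 𝒜.localUnit g) h : A) := by
  conv_lhs => rw [← mul_one a, ← 𝒜.sum_localUnit]
  rw [Finset.mul_sum, decompose_sum, DFinsupp.finsetSum_apply, AddSubmonoidClass.coe_finsetSum]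

theorem decompose_one_mul_apply (a : A) (h : G) :
    (decompose 𝒜.comp a h : A) =
      ∑ g ∈ 𝒜.unitSupport, (decompose 𝒜.comp (𝒜.localUnit g * a) h : A) := by
  conv_lhs => rw [← one_mul a, ← 𝒜.sum_localUnit]
  rw [Finset.sum_mul, decompose_sum, DFinsupp.finsetSum_apply, AddSubmonoidClass.coe_finsetSum]

theorem mul_localUnit_s {h : G} {a : A} (ha : a ∈ 𝒜.comp h) :
    a * 𝒜.localUnit (𝒢.s h) = a := by
  have hmem : a * 𝒜.localUnit (𝒢.s h) ∈ 𝒜.comp h := by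
    simpa only [𝒢.mul_src] using 𝒜.mul_mem _ _ (𝒢.t_s h).symm a ha _ (𝒜.localUnit_mem _)
  calc a * 𝒜.localUnit (𝒢.s h)
      = (decompose 𝒜.comp (a * 𝒜.localUnit (𝒢.s h)) h : A) :=
        (decompose_of_mem_same 𝒜.comp hmem).symm
    _ = ∑ g ∈ 𝒜.unitSupport, (decompose 𝒜.comp (a * 𝒜.localUnit g) h : A) := by
        symm
        refine Finset.sum_eq_single _ (fun g _ hg => ?_) (fun hs => ?_)
        · exact 𝒜.decompose_mul_eq_zero_of_ne_s ha (𝒜.localUnit_mem g) hg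
        · rw [𝒜.localUnit_eq_zero hs, mul_zero, decompose_zero, DirectSum.zero_apply,
            ZeroMemClass.coe_zero]
    _ = a := by rw [← 𝒜.decompose_mul_one_apply, decompose_of_mem_same 𝒜.comp ha]

theorem localUnit_t_mul {h : G} {a : A} (ha : a ∈ 𝒜.comp h) :
    𝒜.localUnit (𝒢.t h) * a = a := by
  have hmem : 𝒜.localUnit (𝒢.t h) * a ∈ 𝒜.comp h := by
    simpa only [𝒢.tgt_mul] using 𝒜.mul_mem _ _ (𝒢.s_t h) _ (𝒜.localUnit_mem _) a ha
  calc 𝒜.localUnit (𝒢.t h) * a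
      = (decompose 𝒜.comp (𝒜.localUnit (𝒢.t h) * a) h : A) :=
        (decompose_of_mem_same 𝒜.comp hmem).symm
    _ = ∑ g ∈ 𝒜.unitSupport, (decompose 𝒜.comp (𝒜.localUnit g * a) h : A) := by
        symm
        refine Finset.sum_eq_single _ (fun g _ hg => ?_) (fun hs => ?_)
        · exact 𝒜.decompose_mul_eq_zero_of_ne_t (𝒜.localUnit_mem g) ha hg
        · rw [𝒜.localUnit_eq_zero hs, zero_mul, decompose_zero, DirectSum.zero_apply,
            ZeroMemClass.coe_zero]
    _ = a := by rw [← 𝒜.decompose_one_mul_apply, decompose_of_mem_same 𝒜.comp ha]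

theorem mul_sum_localUnit_obj {h : G} {a : A} (ha : a ∈ 𝒜.comp h) :
    a * ∑ e ∈ 𝒜.unitSupport with 𝒢.obj e, 𝒜.localUnit e = a := by
  rw [Finset.mul_sum, Finset.sum_eq_single (𝒢.s h), 𝒜.mul_localUnit_s ha]
  · intro e he hne
    refine 𝒜.mul_eq_zero h e ?_ a ha _ (𝒜.localUnit_mem e)
    rw [𝒢.t_eq_of_obj (Finset.mem_filter.mp he).2]
    exact Ne.symm hne
  · intro hs
    have hs' : 𝒢.s h ∉ 𝒜.unitSupport :=
      fun hmem => hs (Finset.mem_filter.mpr ⟨hmem, 𝒢.obj_s h⟩)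
    rw [𝒜.localUnit_eq_zero hs', mul_zero]

theorem sum_localUnit_obj : ∑ e ∈ 𝒜.unitSupport with 𝒢.obj e, 𝒜.localUnit e = 1 := by
  set r := ∑ e ∈ 𝒜.unitSupport with 𝒢.obj e, 𝒜.localUnit e
  calc r = (∑ g ∈ 𝒜.unitSupport, 𝒜.localUnit g) * r := by
        rw [𝒜.sum_localUnit, one_mul]
    _ = ∑ g ∈ 𝒜.unitSupport, 𝒜.localUnit g := by
        rw [Finset.sum_mul]
        exact Finset.sum_congr rfl fun g _ => 𝒜.mul_sum_localUnit_obj (𝒜.localUnit_mem g)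
    _ = 1 := 𝒜.sum_localUnit

theorem finsum_localUnit_obj : ∑ᶠ e ∈ 𝒢.Objs, 𝒜.localUnit e = 1 := by
  rw [finsum_mem_eq_sum_of_subset _ (t := 𝒜.unitSupport.filter 𝒢.obj) ?_ ?_,
    𝒜.sum_localUnit_obj]
  · rintro e ⟨he, hne⟩
    exact Finset.mem_filter.mpr ⟨by_contra fun hs => hne (𝒜.localUnit_eq_zero hs), he⟩
  · intro e he
    exact (Finset.mem_filter.mp he).2

end GpdGrading

theorem graded_algebra_local_units_general
    {G : Type u} (𝒢 : Gpd G) (k : Type v) (A : Type w)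
    [Field k] [Ring A] [Algebra k A]
    (𝒜 : GpdGrading 𝒢 k A) :
    ∃ one : G → A,
      (∀ e, 𝒢.obj e → one e ∈ 𝒜.comp e ∧
        ∀ a ∈ 𝒜.comp e, one e * a = a ∧ a * one e = a) ∧
      (1 : A) = ∑ᶠ e ∈ 𝒢.Objs, one e := by
  let := 𝒜.internal.chooseDecomposition
  refine ⟨𝒜.localUnit, fun e he => ⟨𝒜.localUnit_mem e, fun a ha => ⟨?_, ?_⟩⟩,
    𝒜.finsum_localUnit_obj.symm⟩
  · simpa only [𝒢.t_eq_of_obj he] using 𝒜.localUnit_t_mul ha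
  · simpa only [show 𝒢.s e = e from he] using 𝒜.mul_localUnit_s ha

/-- If `𝒢` is a groupoid with finitely many objects and
`A` is a `𝒢`-graded algebra over a field `k`, then every component `A_e`
(`e ∈ 𝒢₀`) has an identity element `1_e`, and `1_A = Σ_{e ∈ 𝒢₀} 1_e`. -/
theorem graded_algebra_local_units
    {G : Type u} (𝒢 : Gpd G) (k : Type v) (A : Type w)
    [Field k] [Ring A] [Algebra k A]
    (hG₀ : 𝒢.Objs.Finite) (𝒜 : GpdGrading 𝒢 k A) :
    ∃ one : G → A,
      (∀ e, 𝒢.obj e → one e ∈ 𝒜.comp e ∧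
        ∀ a ∈ 𝒜.comp e, one e * a = a ∧ a * one e = a) ∧
      (1 : A) = ∑ᶠ e ∈ 𝒢.Objs, one e :=
  graded_algebra_local_units_general 𝒢 k A 𝒜

end
end

section
/- Let 𝒢 be a groupoid with 𝒢₀ finite, A a unital 𝒢-graded algebra, and X, Z finite split 𝒢-sets via α=(X_g,α_g)_{g∈𝒢} and β=(Z_g,β_g)_{g∈𝒢} respectively. If φ : X → Z is a morphism of 𝒢-sets, then the map φ* : A #_β^𝒢 Z → A #_α^𝒢 X given by φ*(a_g δ_z) = Σ_{x ∈ I_{g,z}} a_g δ_x when I_{g,z} = {x∈X_{d(g)} : φ(x)=z} is nonempty, and φ*(a_g δ_z) = 0 otherwise, is a homomorphism of algebras. Moreover, if φ is injective then φ* is surjective, and if φ is surjective then φ* is injective. -/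
open scoped Classical

noncomputable section

universe u v w

/-- The map `φ* : A #_β^𝒢 Z → A #_α^𝒢 X` induced by a map `φ : X → Z` of
`𝒢`-sets: `φ*(a_g δ_z) = Σ_{x ∈ I_{g,z}} a_g δ_x` where
`I_{g,z} = {x ∈ X_{d(g)} : φ(x) = z}` (the empty sum being `0`). -/
noncomputable def morphStar {G : Type u} {𝒢 : Gpd G} {X : Type v} {Z : Type*} {A : Type w}
    [Ring A] (α : GpdSetAction 𝒢 X) (φ : X → Z) (f : (G × Z) →₀ A) : (G × X) →₀ A :=
  f.sum fun p a =>
    ∑ᶠ x ∈ {x | x ∈ α.car (𝒢.s p.1) ∧ φ x = p.2}, Finsupp.single ((p.1, x) : G × X) a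

/-!
Coefficientwise, `(φ* f)(g, x) = f(g, φ x)` for `x ∈ X_{d(g)}` and `0` otherwise. This gives
linearity at once, and surjectivity for injective `φ` by pushing an element forward along `φ`.
For surjective `φ`, splitness forces every preimage of a point of `Z_{d(g)}` to lie in
`X_{d(g)}`, which gives injectivity. By biadditivity, multiplicativity reduces to homogeneous
elements `a δ_{(g,z)}` and `b δ_{(h,w)}`; there equivariance of `φ` shows that `α_h` maps the
fibre `I_{h,w}` into `I_{g,z}` exactly when `β_h(w) = z`, and into its complement otherwise.
-/

section SmashMul

variable {G : Type u} {𝒢 : Gpd G} {X : Type v} {A : Type w} [Ring A] (α : GpdSetAction 𝒢 X)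

theorem smashMul_add_left (u₁ u₂ v : (G × X) →₀ A) :
    smashMul α (u₁ + u₂) v = smashMul α u₁ v + smashMul α u₂ v := by
  refine Finsupp.sum_add_index' (fun _ => by simp) fun p a₁ a₂ => ?_
  rw [← Finsupp.sum_add]
  refine Finsupp.sum_congr fun q _ => ?_
  split_ifs <;> simp [add_mul]

theorem smashMul_add_right (u v₁ v₂ : (G × X) →₀ A) :
    smashMul α u (v₁ + v₂) = smashMul α u v₁ + smashMul α u v₂ := by
  rw [smashMul, smashMul, smashMul, ← Finsupp.sum_add]
  refine Finsupp.sum_congr fun p _ =>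
    Finsupp.sum_add_index' (fun _ => by simp) fun q b₁ b₂ => ?_
  split_ifs <;> simp [mul_add]

def smashMulHom : ((G × X) →₀ A) →+ ((G × X) →₀ A) →+ ((G × X) →₀ A) :=
  AddMonoidHom.mk' (fun u => AddMonoidHom.mk' (smashMul α u) (smashMul_add_right α u))
    fun u₁ u₂ => AddMonoidHom.ext (smashMul_add_left α u₁ u₂)

@[simp]
theorem smashMulHom_apply (u v : (G × X) →₀ A) : smashMulHom α u v = smashMul α u v := rfl

theorem smashMul_single_single (p q : G × X) (a b : A) :
    smashMul α (Finsupp.single p a) (Finsupp.single q b) =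
      if 𝒢.s p.1 = 𝒢.t q.1 ∧ α.act q.1 q.2 = p.2
      then Finsupp.single ((𝒢.mul p.1 q.1, q.2) : G × X) (a * b) else 0 := by
  rw [smashMul, Finsupp.sum_single_index (by simp), Finsupp.sum_single_index (by simp)]

end SmashMul

namespace GpdSetAction

variable {G : Type u} {𝒢 : Gpd G} {X : Type v} {Z : Type*} [Finite X]

/-- The fibre `I_{g,z}` of the paper. -/
def morphFiber (α : GpdSetAction 𝒢 X) (φ : X → Z) (g : G) (z : Z) : Finset X :=
  (Set.toFinite {x | x ∈ α.car (𝒢.s g) ∧ φ x = z}).toFinset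

@[simp]
theorem mem_morphFiber {α : GpdSetAction 𝒢 X} {φ : X → Z} {g : G} {z : Z} {x : X} :
    x ∈ α.morphFiber φ g z ↔ x ∈ α.car (𝒢.s g) ∧ φ x = z := by
  simp [morphFiber]

end GpdSetAction

open GpdSetAction

section MorphStar

variable {G : Type u} {𝒢 : Gpd G} {X : Type v} {Z : Type*} {A : Type w} [Ring A] [Finite X]
  (α : GpdSetAction 𝒢 X) (φ : X → Z)

theorem morphStar_eq_sum (f : (G × Z) →₀ A) :
    morphStar α φ f =
      f.sum fun p a => ∑ x ∈ α.morphFiber φ p.1 p.2, Finsupp.single ((p.1, x) : G × X) a := by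
  simp only [morphStar, finsum_mem_eq_finite_toFinset_sum _ (Set.toFinite _)]
  rfl

theorem morphStar_single (p : G × Z) (a : A) :
    morphStar α φ (Finsupp.single p a) =
      ∑ x ∈ α.morphFiber φ p.1 p.2, Finsupp.single ((p.1, x) : G × X) a := by
  rw [morphStar_eq_sum, Finsupp.sum_single_index (by simp)]

theorem morphStar_apply (f : (G × Z) →₀ A) (g : G) (x : X) :
    morphStar α φ f (g, x) = if x ∈ α.car (𝒢.s g) then f (g, φ x) else 0 := by
  have hterm : ∀ p : G × Z, ∀ a : A,
      (∑ x' ∈ α.morphFiber φ p.1 p.2, Finsupp.single ((p.1, x') : G × X) a) (g, x) =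
        if p = (g, φ x) ∧ x ∈ α.car (𝒢.s g) then a else 0 := by
    rintro ⟨h, z⟩ a
    rw [Finsupp.finsetSum_apply]
    by_cases hg : h = g
    · subst hg
      simp [Finsupp.single_apply, and_comm, eq_comm]
    · simp [hg]
  rw [morphStar_eq_sum, Finsupp.sum_apply]
  simp only [hterm]
  split_ifs with hx
  · simp [hx, Finsupp.sum_ite_eq', eq_comm]
  · simp [hx]

theorem morphStar_zero : morphStar α φ (0 : (G × Z) →₀ A) = 0 := by
  rw [morphStar_eq_sum, Finsupp.sum_zero_index]

theorem morphStar_add (f₁ f₂ : (G × Z) →₀ A) :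
    morphStar α φ (f₁ + f₂) = morphStar α φ f₁ + morphStar α φ f₂ := by
  ext ⟨g, x⟩
  simp only [Finsupp.add_apply, morphStar_apply]
  split_ifs <;> simp

theorem morphStar_smul {R : Type*} [SMulZeroClass R A] (c : R) (f : (G × Z) →₀ A) :
    morphStar α φ (c • f) = c • morphStar α φ f := by
  ext ⟨g, x⟩
  simp only [Finsupp.smul_apply, morphStar_apply]
  split_ifs <;> simp

end MorphStar

section Multiplicative

variable {G : Type u} {𝒢 : Gpd G} {X : Type v} {Z : Type*} {A : Type w} [Ring A] [Finite X]
  {α : GpdSetAction 𝒢 X} {β : GpdSetAction 𝒢 Z} {φ : X → Z}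

theorem act_mem_morphFiber_iff
    (hφ : ∀ g, ∀ x ∈ α.car (𝒢.inv g), φ (α.act g x) = β.act g (φ x))
    {g h : G} {w z : Z} {y : X} (hgh : 𝒢.s g = 𝒢.t h) (hy : y ∈ α.morphFiber φ h z) :
    α.act h y ∈ α.morphFiber φ g w ↔ β.act h z = w := by
  rw [mem_morphFiber] at hy ⊢
  have hy' : y ∈ α.car (𝒢.inv h) := by rw [α.car_t, 𝒢.t_inv]; exact hy.1
  have hact : α.act h y ∈ α.car (𝒢.s g) := by
    rw [hgh, ← α.car_t]; exact (α.bijOn h).mapsTo hy'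
  rw [hφ h y hy', hy.2]
  exact and_iff_right hact

theorem morphStar_smashMul_single_single
    (hφ : ∀ g, ∀ x ∈ α.car (𝒢.inv g), φ (α.act g x) = β.act g (φ x))
    (p q : G × Z) (a b : A) :
    morphStar α φ (smashMul β (Finsupp.single p a) (Finsupp.single q b)) =
      smashMul α (morphStar α φ (Finsupp.single p a)) (morphStar α φ (Finsupp.single q b)) := by
  simp only [morphStar_single, ← smashMulHom_apply, map_sum, AddMonoidHom.finsetSum_apply]
  simp only [smashMulHom_apply, smashMul_single_single]
  by_cases hgh : 𝒢.s p.1 = 𝒢.t q.1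
  · have hfiber : α.morphFiber φ (𝒢.mul p.1 q.1) q.2 = α.morphFiber φ q.1 q.2 := by
      simp only [morphFiber, 𝒢.s_mul _ _ hgh]
    have hterm : ∀ y ∈ α.morphFiber φ q.1 q.2,
        (∑ x ∈ α.morphFiber φ p.1 p.2, if α.act q.1 y = x
          then Finsupp.single ((𝒢.mul p.1 q.1, y) : G × X) (a * b) else 0) =
        if β.act q.1 q.2 = p.2
          then Finsupp.single ((𝒢.mul p.1 q.1, y) : G × X) (a * b) else 0 := fun y hy => by
      rw [Finset.sum_ite_eq]
      exact if_congr (act_mem_morphFiber_iff hφ hgh hy) rfl rfl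
    simp only [hgh, true_and]
    rw [Finset.sum_congr rfl hterm, Finset.sum_ite_irrel, Finset.sum_const_zero,
      apply_ite (morphStar α φ), morphStar_single, morphStar_zero, hfiber]
  · simp [hgh, morphStar_zero]

theorem morphStar_smashMul
    (hφ : ∀ g, ∀ x ∈ α.car (𝒢.inv g), φ (α.act g x) = β.act g (φ x))
    (f₁ f₂ : (G × Z) →₀ A) :
    morphStar α φ (smashMul β f₁ f₂) = smashMul α (morphStar α φ f₁) (morphStar α φ f₂) := by
  induction f₁ using Finsupp.induction_linear with
  | zero => simp only [← smashMulHom_apply, morphStar_zero, map_zero, AddMonoidHom.zero_apply]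
  | add u₁ u₂ h₁ h₂ =>
    simp only [← smashMulHom_apply, morphStar_add, map_add, AddMonoidHom.add_apply] at *
    rw [h₁, h₂]
  | single p a =>
    induction f₂ using Finsupp.induction_linear with
    | zero => simp only [← smashMulHom_apply, morphStar_zero, map_zero]
    | add v₁ v₂ h₁ h₂ =>
      simp only [← smashMulHom_apply, morphStar_add, map_add] at *
      rw [h₁, h₂]
    | single q b => exact morphStar_smashMul_single_single hφ p q a b

end Multiplicative

section SmashSet

variable {G : Type u} {𝒢 : Gpd G} {X : Type v} {Z : Type*} {k : Type*} {A : Type w}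
  [Field k] [Ring A] [Algebra k A] {𝒜 : GpdGrading 𝒢 k A}
  {α : GpdSetAction 𝒢 X} {β : GpdSetAction 𝒢 Z} {φ : X → Z}

theorem eq_zero_of_mem_smashSet {f : (G × X) →₀ A} (hf : f ∈ smashSet α 𝒜) {g : G} {x : X}
    (hx : x ∉ α.car (𝒢.s g)) : f (g, x) = 0 :=
  not_not.mp fun hne => hx ((hf (g, x)).2 hne)

theorem morphStar_mem_smashSet [Finite X] {f : (G × Z) →₀ A} (hf : f ∈ smashSet β 𝒜) :
    morphStar α φ f ∈ smashSet α 𝒜 := by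
  rintro ⟨g, x⟩
  rw [morphStar_apply]
  split_ifs with hx
  · exact ⟨(hf (g, φ x)).1, fun _ => hx⟩
  · exact ⟨Submodule.zero_mem _, fun h => (h rfl).elim⟩

theorem surjOn_morphStar [Finite X] (hφ : ∀ g, φ '' α.car g ⊆ β.car g)
    (hinj : Function.Injective φ) :
    Set.SurjOn (morphStar α φ) (smashSet β 𝒜) (smashSet α 𝒜) := by
  intro F hF
  have hmap : Function.Injective (Prod.map id φ : G × X → G × Z) :=
    Function.injective_id.prodMap hinj
  refine ⟨Finsupp.mapDomain (Prod.map id φ) F, ?_, ?_⟩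
  · rintro ⟨g, z⟩
    by_cases hz : z ∈ Set.range φ
    · obtain ⟨x, rfl⟩ := hz
      have hval : Finsupp.mapDomain (Prod.map id φ) F (g, φ x) = F (g, x) :=
        Finsupp.mapDomain_apply hmap F (g, x)
      rw [hval]
      exact ⟨(hF (g, x)).1, fun hne => hφ _ ⟨x, (hF (g, x)).2 hne, rfl⟩⟩
    · have hzero : Finsupp.mapDomain (Prod.map id φ) F (g, z) = 0 :=
        Finsupp.mapDomain_of_notMem_range F _ fun ⟨p, hp⟩ => hz ⟨p.2, congrArg Prod.snd hp⟩
      rw [hzero]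
      exact ⟨Submodule.zero_mem _, fun h => (h rfl).elim⟩
  · ext ⟨g, x⟩
    rw [morphStar_apply]
    split_ifs with hx
    · exact Finsupp.mapDomain_apply hmap F (g, x)
    · exact (eq_zero_of_mem_smashSet hF hx).symm

theorem GpdSetAction.Split.mem_car_of_map_mem (hsplitX : α.Split) (hsplitZ : β.Split)
    (hφ : ∀ g, φ '' α.car g ⊆ β.car g) {e : G} (he : 𝒢.obj e) {x : X}
    (hx : φ x ∈ β.car e) : x ∈ α.car e := by
  obtain ⟨e', ⟨he', hxe'⟩, -⟩ := hsplitX x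
  obtain ⟨_, -, huniq⟩ := hsplitZ (φ x)
  have hee' : e' = e := (huniq e' ⟨he', hφ e' ⟨x, hxe', rfl⟩⟩).trans (huniq e ⟨he, hx⟩).symm
  exact hee' ▸ hxe'

theorem injOn_morphStar [Finite X] (hsplitX : α.Split) (hsplitZ : β.Split)
    (hφ : ∀ g, φ '' α.car g ⊆ β.car g) (hsurj : Function.Surjective φ) :
    Set.InjOn (morphStar α φ) (smashSet β 𝒜) := by
  intro f₁ h₁ f₂ h₂ heq
  ext ⟨g, z⟩
  by_cases hz : z ∈ β.car (𝒢.s g)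
  · obtain ⟨x, rfl⟩ := hsurj z
    have hx : x ∈ α.car (𝒢.s g) :=
      hsplitX.mem_car_of_map_mem hsplitZ hφ (𝒢.s_s g) hz
    simpa [morphStar_apply, hx] using DFunLike.congr_fun heq (g, x)
  · rw [eq_zero_of_mem_smashSet h₁ hz, eq_zero_of_mem_smashSet h₂ hz]

end SmashSet

theorem smash_product_morphStar_algebra_hom_general
    {G : Type u} (𝒢 : Gpd G) {X : Type v} {Z : Type*} (k : Type*) (A : Type w)
    [Field k] [Ring A] [Algebra k A] [Finite X]
    (𝒜 : GpdGrading 𝒢 k A)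
    (α : GpdSetAction 𝒢 X) (β : GpdSetAction 𝒢 Z)
    (hsplitX : α.Split) (hsplitZ : β.Split)
    (φ : X → Z)
    -- φ is a morphism of 𝒢-sets
    (hφ₁ : ∀ g, φ '' α.car g ⊆ β.car g)
    (hφ₂ : ∀ g, ∀ x ∈ α.car (𝒢.inv g), φ (α.act g x) = β.act g (φ x)) :
    -- φ* maps the smash product over Z into the smash product over X
    (∀ f ∈ smashSet β 𝒜, morphStar α φ f ∈ smashSet α 𝒜) ∧
    -- φ* is a homomorphism of algebras
    (∀ f₁ ∈ smashSet β 𝒜, ∀ f₂ ∈ smashSet β 𝒜,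
      morphStar α φ (f₁ + f₂) = morphStar α φ f₁ + morphStar α φ f₂) ∧
    (∀ (c : k), ∀ f ∈ smashSet β 𝒜, morphStar α φ (c • f) = c • morphStar α φ f) ∧
    (∀ f₁ ∈ smashSet β 𝒜, ∀ f₂ ∈ smashSet β 𝒜,
      morphStar α φ (smashMul β f₁ f₂) = smashMul α (morphStar α φ f₁) (morphStar α φ f₂)) ∧
    -- if φ is injective then φ* is surjective
    (Function.Injective φ → Set.SurjOn (morphStar α φ) (smashSet β 𝒜) (smashSet α 𝒜)) ∧
    -- if φ is surjective then φ* is injective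
    (Function.Surjective φ → Set.InjOn (morphStar α φ) (smashSet β 𝒜)) :=
  ⟨fun _ hf => morphStar_mem_smashSet hf,
    fun f₁ _ f₂ _ => morphStar_add α φ f₁ f₂,
    fun c f _ => morphStar_smul α φ c f,
    fun f₁ _ f₂ _ => morphStar_smashMul hφ₂ f₁ f₂,
    surjOn_morphStar hφ₁,
    injOn_morphStar hsplitX hsplitZ hφ₁⟩

/-- A morphism of finite split `𝒢`-sets `φ : X → Z` induces
an algebra homomorphism `φ* : A #_β^𝒢 Z → A #_α^𝒢 X`; moreover `φ*` is
surjective when `φ` is injective, and injective when `φ` is surjective. -/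
theorem smash_product_morphStar_algebra_hom
    {G : Type u} (𝒢 : Gpd G) {X : Type v} {Z : Type*} (k : Type*) (A : Type w)
    [Field k] [Ring A] [Algebra k A] [Finite X] [Finite Z]
    (hG₀ : 𝒢.Objs.Finite) (𝒜 : GpdGrading 𝒢 k A)
    (α : GpdSetAction 𝒢 X) (β : GpdSetAction 𝒢 Z)
    (hsplitX : α.Split) (hsplitZ : β.Split)
    (φ : X → Z)
    -- φ is a morphism of 𝒢-sets
    (hφ₁ : ∀ g, φ '' α.car g ⊆ β.car g)
    (hφ₂ : ∀ g, ∀ x ∈ α.car (𝒢.inv g), φ (α.act g x) = β.act g (φ x)) :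
    -- φ* maps the smash product over Z into the smash product over X
    (∀ f ∈ smashSet β 𝒜, morphStar α φ f ∈ smashSet α 𝒜) ∧
    -- φ* is a homomorphism of algebras
    (∀ f₁ ∈ smashSet β 𝒜, ∀ f₂ ∈ smashSet β 𝒜,
      morphStar α φ (f₁ + f₂) = morphStar α φ f₁ + morphStar α φ f₂) ∧
    (∀ (c : k), ∀ f ∈ smashSet β 𝒜, morphStar α φ (c • f) = c • morphStar α φ f) ∧
    (∀ f₁ ∈ smashSet β 𝒜, ∀ f₂ ∈ smashSet β 𝒜,
      morphStar α φ (smashMul β f₁ f₂) = smashMul α (morphStar α φ f₁) (morphStar α φ f₂)) ∧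
    -- if φ is injective then φ* is surjective
    (Function.Injective φ → Set.SurjOn (morphStar α φ) (smashSet β 𝒜) (smashSet α 𝒜)) ∧
    -- if φ is surjective then φ* is injective
    (Function.Surjective φ → Set.InjOn (morphStar α φ) (smashSet β 𝒜)) :=
  smash_product_morphStar_algebra_hom_general 𝒢 k A 𝒜 α β hsplitX hsplitZ φ hφ₁ hφ₂
end
end
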